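/- Let p and q be real numbers with 0 < q < p ≤ 1, let n be a positive integer, let u be a real number, and let v be a real number with v < 0 such that u + v − j ≠ 0 for every j ∈ ℕ. Then the series Σ_{κ=0}^{∞} C_{p,q}(n+κ−1,κ) · p^{κ(v−n+1)} · q^{n(u−κ)} · [u]_{κ,p,q} / [u+v]_{n+κ,p,q} converges and its sum equals 1/[v]_{n,p,q}. -/

import Mathlib

/-- The (p,q)-deformed number `[x]_{p,q} = (p^x - q^x)/(p - q)` (real powers). -/
noncomputable def pqNum (p q x : ℝ) : ℝ := (p ^ x - q ^ x) / (p - q)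

/-- The (p,q)-factorial `[n]_{p,q}! = ∏_{i=1}^n [i]_{p,q}`. -/
noncomputable def pqFac (p q : ℝ) (n : ℕ) : ℝ := ∏ i ∈ Finset.range n, pqNum p q ((i : ℝ) + 1)

/-- The κ-th order (p,q)-factorial `[x]_{κ,p,q} = ∏_{v=0}^{κ-1} [x-v]_{p,q}`. -/
noncomputable def pqFacOrd (p q x : ℝ) (j : ℕ) : ℝ := ∏ v ∈ Finset.range j, pqNum p q (x - (v : ℝ))

/-- The (p,q)-binomial coefficient with natural upper argument m:
`C_{p,q}(m,κ) = [m]_{κ,p,q}/[κ]_{p,q}!`. -/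
noncomputable def pqBinomN (p q : ℝ) (m k : ℕ) : ℝ := pqFacOrd p q (m : ℝ) k / pqFac p q k

/-!
For `n = 1` the series telescopes: with `e κ = p^{κv} [u]_κ / [u+v]_κ`, the addition rule
`[u+v-κ] = p^v [u-κ] + q^{u-κ} [v]` gives `[v] · (κ-th term) = e κ - e (κ+1)`, and `e` is summable
by the ratio test, its ratios tending to `(p/q)^v < 1`. The step `n → n+1` is the contiguous
relation `1/[z-1]_m - p^m/[z]_m = q^{z-m} [m] / [z]_{m+1}`: applied to `z = v, m = n` for the sums
and to `z = u+v, m = n+κ` termwise, it exhibits the series for `(n+1, v)` as `q^{n-v}/[n]` times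
the series for `(n, v-1)` minus `p^n` times the series for `(n, v)`.
-/

open Filter Topology

lemma hasSum_sub_succ {G : Type*} [AddCommGroup G] [TopologicalSpace G] [IsTopologicalAddGroup G]
    {f : ℕ → G} {a : G} (hf : HasSum f a) : HasSum (fun n ↦ f n - f (n + 1)) (f 0) := by
  simpa using hf.sub ((hasSum_nat_add_iff' 1).mpr hf)

lemma summable_of_succ_eq_mul {R : Type*} [NormedRing R] [CompleteSpace R] {f r : ℕ → R} {l : R}
    (hl : ‖l‖ < 1) (hr : Tendsto r atTop (𝓝 l)) (hf : ∀ n, f (n + 1) = r n * f n) :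
    Summable f := by
  obtain ⟨ρ, hlρ, hρ⟩ := exists_between hl
  refine summable_of_ratio_norm_eventually_le hρ ((hr.norm.eventually_lt_const hlρ).mono ?_)
  intro n hn
  rw [hf]
  exact (norm_mul_le _ _).trans (mul_le_mul_of_nonneg_right hn.le (norm_nonneg _))

section pqNum

variable {p q : ℝ}

lemma pqNum_add (hp : 0 < p) (hq : 0 < q) (hpq : p ≠ q) (x y : ℝ) :
    pqNum p q (x + y) = p ^ y * pqNum p q x + q ^ x * pqNum p q y := by
  have : p - q ≠ 0 := sub_ne_zero.mpr hpq
  simp only [pqNum, Real.rpow_add hp, Real.rpow_add hq]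
  field_simp
  ring

lemma pqNum_ne_zero (hp : 0 < p) (hq : 0 < q) (hpq : p ≠ q) {x : ℝ} (hx : x ≠ 0) :
    pqNum p q x ≠ 0 :=
  div_ne_zero (sub_ne_zero.mpr fun h ↦ hpq ((Real.rpow_left_inj hp.le hq.le hx).mp h))
    (sub_ne_zero.mpr hpq)

lemma pqNum_sub_natCast_div (hp : 0 < p) (hq : 0 < q) (hpq : p ≠ q) (x y : ℝ) (N : ℕ) :
    pqNum p q (x - N) / pqNum p q (y - N)
      = (p ^ x * (q / p) ^ N - q ^ x) / (p ^ y * (q / p) ^ N - q ^ y) := by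
  have hqN : q ^ N ≠ 0 := pow_ne_zero N hq.ne'
  simp only [pqNum, Real.rpow_sub_natCast hp.ne', Real.rpow_sub_natCast hq.ne']
  rw [div_div_div_cancel_right₀ (sub_ne_zero.mpr hpq), ← mul_div_mul_right _ _ hqN]
  congr 1 <;> rw [div_pow] <;> field_simp

lemma tendsto_pqNum_sub_natCast_div (hq : 0 < q) (hqp : q < p) (x y : ℝ) :
    Tendsto (fun N : ℕ ↦ pqNum p q (x - N) / pqNum p q (y - N)) atTop (𝓝 (q ^ x / q ^ y)) := by
  have hp : 0 < p := hq.trans hqp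
  have hgeom : Tendsto (fun N : ℕ ↦ (q / p) ^ N) atTop (𝓝 0) :=
    tendsto_pow_atTop_nhds_zero_of_lt_one (by positivity) ((div_lt_one hp).mpr hqp)
  have hlim := ((hgeom.const_mul (p ^ x)).sub_const (q ^ x)).div
    ((hgeom.const_mul (p ^ y)).sub_const (q ^ y)) (by simp [(Real.rpow_pos_of_pos hq y).ne'])
  simp only [mul_zero, zero_sub, neg_div_neg_eq] at hlim
  exact hlim.congr fun N ↦ (pqNum_sub_natCast_div hp hq hqp.ne' x y N).symm

end pqNum

section pqFacOrd

variable {p q : ℝ}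

lemma pqFacOrd_succ (x : ℝ) (k : ℕ) :
    pqFacOrd p q x (k + 1) = pqFacOrd p q x k * pqNum p q (x - k) :=
  Finset.prod_range_succ _ _

lemma pqFacOrd_succ' (x : ℝ) (k : ℕ) :
    pqFacOrd p q x (k + 1) = pqNum p q x * pqFacOrd p q (x - 1) k := by
  simp only [pqFacOrd, Finset.prod_range_succ', Nat.cast_add, Nat.cast_one, Nat.cast_zero,
    sub_zero, sub_add_eq_sub_sub_swap, mul_comm]

lemma pqFacOrd_ne_zero (hp : 0 < p) (hq : 0 < q) (hpq : p ≠ q) {x : ℝ} (hx : ∀ i : ℕ, x - i ≠ 0)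
    (k : ℕ) : pqFacOrd p q x k ≠ 0 :=
  Finset.prod_ne_zero_iff.mpr fun i _ ↦ pqNum_ne_zero hp hq hpq (hx i)

lemma pqFacOrd_natCast_self (k : ℕ) : pqFacOrd p q k k = pqFac p q k := by
  induction k with
  | zero => rfl
  | succ k ih =>
    rw [pqFacOrd_succ', Nat.cast_succ, add_sub_cancel_right, ih, pqFac, pqFac,
      Finset.prod_range_succ, mul_comm]

lemma pqBinomN_self (hp : 0 < p) (hq : 0 < q) (hpq : p ≠ q) (k : ℕ) : pqBinomN p q k k = 1 := by
  rw [pqBinomN, pqFacOrd_natCast_self, div_self]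
  exact Finset.prod_ne_zero_iff.mpr fun i _ ↦ pqNum_ne_zero hp hq hpq (by positivity)

lemma pqBinomN_mul_pqNum {n : ℕ} (hn : 1 ≤ n) (κ : ℕ) :
    pqBinomN p q (n + κ) κ * pqNum p q n = pqNum p q (n + κ : ℕ) * pqBinomN p q (n + κ - 1) κ := by
  have hcast : ((n + κ - 1 : ℕ) : ℝ) = (n + κ : ℕ) - 1 := by
    rw [Nat.cast_sub (by omega), Nat.cast_one]
  have h := (pqFacOrd_succ (p := p) (q := q) (n + κ : ℕ) κ).symm.trans (pqFacOrd_succ' _ κ)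
  have hsub : ((n + κ : ℕ) : ℝ) - κ = n := by push_cast; ring
  rw [← hcast, hsub] at h
  rw [pqBinomN, pqBinomN, div_mul_eq_mul_div, h, mul_div_assoc]

lemma pqFacOrd_contiguous (hp : 0 < p) (hq : 0 < q) (hpq : p ≠ q) {z : ℝ} {m : ℕ}
    (hz : pqFacOrd p q z (m + 1) ≠ 0) :
    1 / pqFacOrd p q (z - 1) m - p ^ (m : ℝ) * (1 / pqFacOrd p q z m)
      = q ^ (z - m) * pqNum p q m / pqFacOrd p q z (m + 1) := by
  have h₁ := pqFacOrd_succ' (p := p) (q := q) z m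
  have h₂ := pqFacOrd_succ (p := p) (q := q) z m
  have hadd := pqNum_add hp hq hpq (z - m) m
  rw [sub_add_cancel] at hadd
  have hA : pqFacOrd p q (z - 1) m ≠ 0 := right_ne_zero_of_mul (h₁ ▸ hz)
  have hB : pqFacOrd p q z m ≠ 0 := left_ne_zero_of_mul (h₂ ▸ hz)
  have e₁ : pqFacOrd p q z (m + 1) / pqFacOrd p q (z - 1) m = pqNum p q z := by
    rw [h₁, mul_div_cancel_right₀ _ hA]
  have e₂ : pqFacOrd p q z (m + 1) / pqFacOrd p q z m = pqNum p q (z - m) := by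
    rw [h₂, mul_div_cancel_left₀ _ hB]
  rw [eq_div_iff hz]
  linear_combination e₁ - p ^ (m : ℝ) * e₂ + hadd

lemma one_div_pqFacOrd_succ (hp : 0 < p) (hq : 0 < q) (hpq : p ≠ q) {z : ℝ} {m : ℕ} (hm : m ≠ 0)
    (hz : pqFacOrd p q z (m + 1) ≠ 0) :
    1 / pqFacOrd p q z (m + 1) = q ^ ((m : ℝ) - z) / pqNum p q m *
      (1 / pqFacOrd p q (z - 1) m - p ^ (m : ℝ) * (1 / pqFacOrd p q z m)) := by
  have hm' : pqNum p q m ≠ 0 := pqNum_ne_zero hp hq hpq (Nat.cast_ne_zero.mpr hm)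
  rw [pqFacOrd_contiguous hp hq hpq hz]
  field_simp
  rw [← Real.rpow_add hq, sub_add_sub_cancel', sub_self, Real.rpow_zero]

end pqFacOrd

noncomputable def pqInvSeriesTerm (p q u v : ℝ) (n κ : ℕ) : ℝ :=
  pqBinomN p q (n + κ - 1) κ * p ^ ((κ : ℝ) * (v - (n : ℝ) + 1))
    * q ^ ((n : ℝ) * (u - (κ : ℝ))) * pqFacOrd p q u κ / pqFacOrd p q (u + v) (n + κ)

section pqInvSeriesTerm

variable {p q : ℝ}

lemma hasSum_pqInvSeriesTerm_one (hq : 0 < q) (hqp : q < p) {u v : ℝ} (hv : v < 0)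
    (huv : ∀ j : ℕ, u + v - j ≠ 0) :
    HasSum (pqInvSeriesTerm p q u v 1) (1 / pqFacOrd p q v 1) := by
  have hp : 0 < p := hq.trans hqp
  have hpq : p ≠ q := hqp.ne'
  set e : ℕ → ℝ := fun κ ↦ p ^ ((κ : ℝ) * v) * pqFacOrd p q u κ / pqFacOrd p q (u + v) κ
    with he
  have hratio (κ : ℕ) :
      e (κ + 1) = p ^ v * (pqNum p q (u - κ) / pqNum p q (u + v - κ)) * e κ := by
    simp only [he, pqFacOrd_succ, Nat.cast_succ, add_mul, one_mul, Real.rpow_add hp]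
    ring
  have hlt : ‖p ^ v * (q ^ u / q ^ (u + v))‖ < 1 := by
    rw [Real.rpow_add hq, div_mul_cancel_left₀ (Real.rpow_pos_of_pos hq u).ne', Real.norm_eq_abs,
      abs_of_pos (by positivity), ← div_eq_mul_inv, div_lt_one (by positivity)]
    exact Real.rpow_lt_rpow_of_neg hq hqp hv
  have hsum : Summable e := summable_of_succ_eq_mul hlt
    ((tendsto_pqNum_sub_natCast_div hq hqp u (u + v)).const_mul _) hratio
  have htel (κ : ℕ) : pqInvSeriesTerm p q u v 1 κ = (e κ - e (κ + 1)) / pqNum p q v := by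
    have hadd := pqNum_add hp hq hpq (u - κ) v
    rw [show u - κ + v = u + v - κ by ring] at hadd
    have hD := pqFacOrd_ne_zero hp hq hpq huv κ
    have hN := pqNum_ne_zero hp hq hpq (huv κ)
    have hv' := pqNum_ne_zero hp hq hpq hv.ne
    rw [pqInvSeriesTerm, Nat.add_sub_cancel_left, pqBinomN_self hp hq hpq, add_comm 1 κ,
      pqFacOrd_succ, eq_div_iff hv']
    simp only [he, pqFacOrd_succ, Nat.cast_add, Nat.cast_one, sub_add_cancel, one_mul, add_mul,
      Real.rpow_add hp]
    field_simp
    linear_combination (-pqFacOrd p q u κ) * hadd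
  have he0 : e 0 = 1 := by simp [he, pqFacOrd]
  rw [show pqFacOrd p q v 1 = pqNum p q v by simp [pqFacOrd], ← he0]
  exact ((hasSum_sub_succ hsum.hasSum).div_const _).congr_fun htel

lemma pqInvSeriesTerm_succ (hq : 0 < q) (hqp : q < p) {u w : ℝ} (huw : ∀ j : ℕ, u + w - j ≠ 0)
    {n : ℕ} (hn : 1 ≤ n) (κ : ℕ) :
    pqInvSeriesTerm p q u w (n + 1) κ = q ^ ((n : ℝ) - w) / pqNum p q n *
      (pqInvSeriesTerm p q u (w - 1) n κ - p ^ (n : ℝ) * pqInvSeriesTerm p q u w n κ) := by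
  have hp : 0 < p := hq.trans hqp
  have hpq : p ≠ q := hqp.ne'
  have hc := pqFacOrd_contiguous hp hq hpq (z := u + w) (m := n + κ)
    (pqFacOrd_ne_zero hp hq hpq huw _)
  have hb := pqBinomN_mul_pqNum (p := p) (q := q) hn κ
  have hn0 : pqNum p q n ≠ 0 := pqNum_ne_zero hp hq hpq (by positivity)
  set Y := pqBinomN p q (n + κ - 1) κ * p ^ ((κ : ℝ) * (w - n)) * q ^ ((n : ℝ) * (u - κ))
    * pqFacOrd p q u κ with hY
  have h₁ : pqInvSeriesTerm p q u (w - 1) n κ = Y * (1 / pqFacOrd p q (u + w - 1) (n + κ)) := by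
    rw [pqInvSeriesTerm, show (κ : ℝ) * (w - 1 - n + 1) = κ * (w - n) by ring,
      show u + (w - 1) = u + w - 1 by ring]
    ring
  have h₂ : p ^ (n : ℝ) * pqInvSeriesTerm p q u w n κ
      = Y * (p ^ ((n + κ : ℕ) : ℝ) * (1 / pqFacOrd p q (u + w) (n + κ))) := by
    rw [pqInvSeriesTerm, show (κ : ℝ) * (w - n + 1) = κ * (w - n) + κ by ring, Nat.cast_add,
      Real.rpow_add hp, Real.rpow_add hp]
    ring
  rw [h₁, h₂, ← mul_sub, hc]
  have hqq : q ^ ((n : ℝ) - w) * q ^ (u + w - ((n + κ : ℕ) : ℝ)) = q ^ (u - κ) := by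
    rw [← Real.rpow_add hq]; push_cast; ring_nf
  have hqe : q ^ (((n + 1 : ℕ) : ℝ) * (u - κ)) = q ^ ((n : ℝ) * (u - κ)) * q ^ (u - κ) := by
    rw [← Real.rpow_add hq]; push_cast; ring_nf
  rw [pqInvSeriesTerm, show n + 1 + κ - 1 = n + κ by omega, show n + 1 + κ = n + κ + 1 by omega,
    show (κ : ℝ) * (w - ((n + 1 : ℕ) : ℝ) + 1) = κ * (w - n) by push_cast; ring, hqe, ← hqq, hY]
  field_simp
  linear_combination pqFacOrd p q u κ / pqFacOrd p q (u + w) (n + κ + 1) * hb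

end pqInvSeriesTerm

theorem pq_inverse_expansion_series_general (p q : ℝ) (hq : 0 < q) (hqp : q < p)
    (n : ℕ) (hn : 0 < n) (u v : ℝ) (hv : v < 0)
    (huv : ∀ j : ℕ, u + v - (j : ℝ) ≠ 0) :
    HasSum
      (fun κ : ℕ =>
        pqBinomN p q (n + κ - 1) κ * p ^ ((κ : ℝ) * (v - (n : ℝ) + 1))
          * q ^ ((n : ℝ) * (u - (κ : ℝ)))
          * pqFacOrd p q u κ / pqFacOrd p q (u + v) (n + κ))
      (1 / pqFacOrd p q v n) := by
  have hp : 0 < p := hq.trans hqp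
  change HasSum (pqInvSeriesTerm p q u v n) _
  induction n, hn using Nat.le_induction generalizing v with
  | base => exact hasSum_pqInvSeriesTerm_one hq hqp hv huv
  | succ n hn ih =>
    have huv₁ : ∀ j : ℕ, u + (v - 1) - j ≠ 0 := fun j ↦ by
      simpa [add_sub_assoc', sub_sub, add_comm] using huv (j + 1)
    have hcomb := ((ih (v - 1) (by linarith) huv₁).sub
      ((ih v hv huv).mul_left (p ^ (n : ℝ)))).mul_left (q ^ ((n : ℝ) - v) / pqNum p q n)
    have hz : pqFacOrd p q v (n + 1) ≠ 0 := pqFacOrd_ne_zero hp hq hqp.ne'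
      (fun i ↦ (by linarith [(i.cast_nonneg : (0 : ℝ) ≤ i)] : v - i < 0).ne) _
    rw [one_div_pqFacOrd_succ hp hq hqp.ne' (by omega) hz]
    exact hcomb.congr_fun (pqInvSeriesTerm_succ hq hqp huv hn)

/-- The series expansion of `1/[v]_{n,p,q}`. -/
theorem pq_inverse_expansion_series (p q : ℝ) (hq : 0 < q) (hqp : q < p) (hp : p ≤ 1)
    (n : ℕ) (hn : 0 < n) (u v : ℝ) (hv : v < 0)
    (huv : ∀ j : ℕ, u + v - (j : ℝ) ≠ 0) :
    HasSum
      (fun κ : ℕ =>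
        pqBinomN p q (n + κ - 1) κ * p ^ ((κ : ℝ) * (v - (n : ℝ) + 1))
          * q ^ ((n : ℝ) * (u - (κ : ℝ)))
          * pqFacOrd p q u κ / pqFacOrd p q (u + v) (n + κ))
      (1 / pqFacOrd p q v n) :=
  pq_inverse_expansion_series_general p q hq hqp n hn u v hv huv
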